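/- With the setup of the previous statement, the vector $\bar v$ defined by $\bar v_i = \min(v_i, w_i, w'_i + \sum_{h: i-j}\min(v_j,w_j))$ is the unique maximal element of the set $\{v'\in\mathbb{Z}_{\ge 0}^n : v'\le v,\ v'_i \le w_i\ \forall i,\ v'_i - \sum_{h: i-j} v'_j \le w'_i\ \forall i\}$ with respect to the coordinatewise order; i.e., $\bar v$ belongs to this set and every element $v'$ of the set satisfies $v'\le \bar v$ coordinatewise. -/
import Mathlib


/-- Sum over edges of the multiset `Ω` incident to vertex `i`, of `f` applied to the
other endpoint (counted with multiplicity). -/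
def incSum {n : ℕ} (Ω : Multiset (Fin n × Fin n)) (i : Fin n) (f : Fin n → ℤ) : ℤ :=
  (Ω.map fun e => if e.1 = i then f e.2 else if e.2 = i then f e.1 else 0).sum

lemma incSum_mono {n : ℕ} (Ω : Multiset (Fin n × Fin n)) (i : Fin n)
    (f g : Fin n → ℤ) (h : ∀ j, f j ≤ g j) : incSum Ω i f ≤ incSum Ω i g := by
  apply Multiset.sum_map_le_sum_map
  intro e _
  by_cases h1 : e.1 = i <;> by_cases h2 : e.2 = i <;> simp [h1, h2, h _]

lemma incSum_nonneg {n : ℕ} (Ω : Multiset (Fin n × Fin n)) (i : Fin n)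
    (f : Fin n → ℤ) (h : ∀ j, 0 ≤ f j) : 0 ≤ incSum Ω i f := by
  have := incSum_mono Ω i (fun _ => 0) f (fun j => h j)
  simpa [incSum] using this

lemma incSum_edge_le {n : ℕ} (Ω : Multiset (Fin n × Fin n)) (i j : Fin n)
    (e : Fin n × Fin n) (he : e ∈ Ω)
    (hij : (e.1 = i ∧ e.2 = j) ∨ (e.2 = i ∧ e.1 = j))
    (f : Fin n → ℤ) (h : ∀ k, 0 ≤ f k) (hne : e.1 ≠ e.2) :
    f j ≤ incSum Ω i f := by
  apply Multiset.single_le_sum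
  · intro x hx
    obtain ⟨a, _, rfl⟩ := Multiset.mem_map.mp hx
    by_cases h1 : a.1 = i <;> by_cases h2 : a.2 = i <;> simp [h1, h2, h _]
  · apply Multiset.mem_map.mpr
    refine ⟨e, he, ?_⟩
    rcases hij with ⟨h1, h2⟩ | ⟨h1, h2⟩
    · simp [h1, h2]
    · have : ¬ (e.1 = i) := fun hc => hne (hc.trans h1.symm)
      rw [if_neg this, if_pos h1, h2]

/-- Lemma 3.4: `v̄` with `v̄ᵢ = min(vᵢ, wᵢ, w'ᵢ + ∑_{h:i-j} min(vⱼ,wⱼ))` is the unique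
maximal element of `{v' ≥ 0 : v' ≤ v, v'ᵢ ≤ wᵢ, v'ᵢ - ∑_{h:i-j} v'ⱼ ≤ w'ᵢ}`:
it belongs to this set and dominates every element coordinatewise. -/
theorem stmt1 {n : ℕ} (Ω : Multiset (Fin n × Fin n))
    (hΩ : ∀ e ∈ Ω, e.1 ≠ e.2)
    (w w' v : Fin n → ℤ)
    (hw : ∀ i, 0 ≤ w i) (hw' : ∀ i, 0 ≤ w' i) (hv : ∀ i, 0 ≤ v i)
    (vbar : Fin n → ℤ)
    (hvbar : ∀ i, vbar i =
      min (v i) (min (w i) (w' i + incSum Ω i (fun j => min (v j) (w j))))) :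
    ((∀ i, 0 ≤ vbar i) ∧ (∀ i, vbar i ≤ v i) ∧ (∀ i, vbar i ≤ w i) ∧
      (∀ i, vbar i - incSum Ω i vbar ≤ w' i)) ∧
    (∀ v' : Fin n → ℤ, (∀ i, 0 ≤ v' i) → (∀ i, v' i ≤ v i) → (∀ i, v' i ≤ w i) →
      (∀ i, v' i - incSum Ω i v' ≤ w' i) → ∀ i, v' i ≤ vbar i) := by
  set m : Fin n → ℤ := fun j => min (v j) (w j) with hm
  have hm_nonneg : ∀ j, 0 ≤ m j := fun j => le_min (hv j) (hw j)
  have hvbar_nonneg : ∀ i, 0 ≤ vbar i := by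
    intro i
    rw [hvbar i]
    exact le_min (hv i) (le_min (hw i)
      (add_nonneg (hw' i) (incSum_nonneg Ω i m hm_nonneg)))
  have hvbar_le_v : ∀ i, vbar i ≤ v i := fun i => (hvbar i) ▸ min_le_left _ _
  have hvbar_le_w : ∀ i, vbar i ≤ w i := fun i =>
    (hvbar i) ▸ le_trans (min_le_right _ _) (min_le_left _ _)
  have hvbar_le_m : ∀ i, vbar i ≤ m i := fun i => le_min (hvbar_le_v i) (hvbar_le_w i)
  have hvbar_le_third : ∀ i, vbar i ≤ w' i + incSum Ω i m := fun i =>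
    (hvbar i) ▸ le_trans (min_le_right _ _) (min_le_right _ _)
  have hkey : ∀ i, vbar i - incSum Ω i vbar ≤ w' i := by
    intro i
    rw [sub_le_iff_le_add, add_comm]
    by_cases h : ∀ e ∈ Ω, (e.1 = i → vbar e.2 = m e.2) ∧ (e.2 = i → vbar e.1 = m e.1)
    · have heq : incSum Ω i vbar = incSum Ω i m := by
        unfold incSum
        congr 1
        apply Multiset.map_congr rfl
        intro e he
        by_cases h1 : e.1 = i
        · simp [h1, (h e he).1 h1]
        · by_cases h2 : e.2 = i
          · simp [h1, h2, (h e he).2 h2]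
          · simp [h1, h2]
      rw [heq]
      linarith [hvbar_le_third i]
    · push_neg at h
      obtain ⟨e, he, hcase⟩ := h
      -- extract a neighbor j with vbar j ≠ m j
      have : ∃ j, ((e.1 = i ∧ e.2 = j) ∨ (e.2 = i ∧ e.1 = j)) ∧ vbar j ≠ m j := by
        by_cases hA : e.1 = i ∧ vbar e.2 ≠ m e.2
        · exact ⟨e.2, Or.inl ⟨hA.1, rfl⟩, hA.2⟩
        · have h' := hcase (by intro h1; by_contra hc; exact hA ⟨h1, hc⟩)
          exact ⟨e.1, Or.inr ⟨h'.1, rfl⟩, h'.2⟩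
      obtain ⟨j, hij, hne⟩ := this
      have hlt : vbar j < m j := lt_of_le_of_ne (hvbar_le_m j) hne
      have hj : vbar j = w' j + incSum Ω j m := by
        have h' : vbar j = min (m j) (w' j + incSum Ω j m) := by
          rw [hvbar j, hm, min_assoc]
        rw [h'] at hlt ⊢
        simp only [min_def] at hlt ⊢
        split at hlt <;> split <;> omega
      -- edge between i and j, with i on one side
      have hmi_le : m i ≤ incSum Ω j m := by
        apply incSum_edge_le Ω j i e he _ m hm_nonneg (hΩ e he)
        rcases hij with ⟨h1, h2⟩ | ⟨h1, h2⟩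
        · exact Or.inr ⟨h2, h1⟩
        · exact Or.inl ⟨h2, h1⟩
      have hvj_le : vbar j ≤ incSum Ω i vbar :=
        incSum_edge_le Ω i j e he hij vbar hvbar_nonneg (hΩ e he)
      have : vbar i ≤ vbar j := by
        calc vbar i ≤ m i := hvbar_le_m i
          _ ≤ incSum Ω j m := hmi_le
          _ ≤ w' j + incSum Ω j m := le_add_of_nonneg_left (hw' j)
          _ = vbar j := hj.symm
      calc vbar i ≤ vbar j := this
        _ ≤ incSum Ω i vbar := hvj_le
        _ ≤ incSum Ω i vbar + w' i := le_add_of_nonneg_right (hw' i)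
  refine ⟨⟨hvbar_nonneg, hvbar_le_v, hvbar_le_w, hkey⟩, ?_⟩
  intro v' h0 h1 h2 h3 i
  rw [hvbar i]
  refine le_min (h1 i) (le_min (h2 i) ?_)
  have : incSum Ω i v' ≤ incSum Ω i m :=
    incSum_mono Ω i v' m (fun j => le_min (h1 j) (h2 j))
  have := h3 i
  omega
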